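/- Assume q = 4 and r ≥ 4, that conditions (B) and (D) hold, that L_1 is an irreducible L_0-module, that condition (F1) holds, that every nonzero L_0-submodule V of L_{−2} satisfies [V, L_1] = L_{−1}, that [L_{−2}, L_{−2}] = L_{−4}, and that [L_{−4}, L_3] = L_{−1}. Then L_{−2} is an irreducible L_0-module. (Proved in Section 4, the depth-four case.) -/
import Mathlib


/- Graded Lie algebra setting: `F` a field of characteristic 3, `A` a
finite-dimensional Lie algebra over `F`, with a `ℤ`-grading `L : ℤ → Submodule F A`. -/

namespace GradedLie

variable {F A : Type*} [Field F] [CharP F 3] [LieRing A] [LieAlgebra F A]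

/-- The linear span of all brackets `⁅u, v⁆` with `u ∈ U`, `v ∈ V`. -/
def bSpan (U V : Submodule F A) : Submodule F A :=
  Submodule.span F {z | ∃ u ∈ U, ∃ v ∈ V, z = ⁅u, v⁆}

/-- `M` is an irreducible `L0`-module under the adjoint action:
`M ≠ 0` and the only `L0`-submodules of `M` are `0` and `M`. -/
def IsIrred (L0 M : Submodule F A) : Prop :=
  M ≠ ⊥ ∧ ∀ V ≤ M, bSpan L0 V ≤ V → V = ⊥ ∨ V = M

private def lmulₗ (m : A) : A →ₗ[F] A where
  toFun x := ⁅m, x⁆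
  map_add' x y := by simp
  map_smul' t x := by simp

private def rmulₗ (n : A) : A →ₗ[F] A where
  toFun x := ⁅x, n⁆
  map_add' x y := by simp
  map_smul' t x := by simp

lemma lie_mem_bSpan {U V : Submodule F A} {u v : A} (hu : u ∈ U) (hv : v ∈ V) :
    ⁅u, v⁆ ∈ bSpan U V :=
  Submodule.subset_span ⟨u, hu, v, hv, rfl⟩

lemma bSpan_le {U V W : Submodule F A} (h : ∀ u ∈ U, ∀ v ∈ V, ⁅u, v⁆ ∈ W) :
    bSpan U V ≤ W := by
  refine Submodule.span_le.mpr ?_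
  rintro z ⟨u, hu, v, hv, rfl⟩
  exact h u hu v hv

lemma lie_bSpan_right {U V W : Submodule F A} {m n : A} (hn : n ∈ bSpan U V)
    (h : ∀ u ∈ U, ∀ v ∈ V, ⁅m, ⁅u, v⁆⁆ ∈ W) : ⁅m, n⁆ ∈ W := by
  have hle : bSpan U V ≤ W.comap (lmulₗ m) := by
    refine Submodule.span_le.mpr ?_
    rintro z ⟨u, hu, v, hv, rfl⟩
    exact h u hu v hv
  exact hle hn

lemma lie_bSpan_left {U V W : Submodule F A} {m n : A} (hm : m ∈ bSpan U V)
    (h : ∀ u ∈ U, ∀ v ∈ V, ⁅⁅u, v⁆, n⁆ ∈ W) : ⁅m, n⁆ ∈ W := by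
  have hle : bSpan U V ≤ W.comap (rmulₗ n) := by
    refine Submodule.span_le.mpr ?_
    rintro z ⟨u, hu, v, hv, rfl⟩
    exact h u hu v hv
  exact hle hm

lemma lie_bSpan_mid {U V W : Submodule F A} {v n p : A} (hp : p ∈ bSpan U V)
    (h : ∀ u ∈ U, ∀ w ∈ V, ⁅⁅v, ⁅u, w⁆⁆, n⁆ ∈ W) : ⁅⁅v, p⁆, n⁆ ∈ W := by
  have hle : bSpan U V ≤ W.comap ((rmulₗ n).comp (lmulₗ v)) := by
    refine Submodule.span_le.mpr ?_
    rintro z ⟨u, hu, w, hw, rfl⟩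
    exact h u hu w hw
  exact hle hp

/-- The depth-four case (Section 4): if `q = 4`, `r ≥ 4`, (B), (D), (F1) hold,
`L 1` is irreducible, every nonzero `L 0`-submodule `V` of `L (-2)` satisfies
`[V, L 1] = L (-1)`, `[L (-2), L (-2)] = L (-4)`, and `[L (-4), L 3] = L (-1)`,
then `L (-2)` is an irreducible `L 0`-module. -/
theorem depth_four_irreducibility
    [FiniteDimensional F A]
    (L : ℤ → Submodule F A)
    (hdecomp : DirectSum.IsInternal L)
    (hgrade : ∀ i j : ℤ, ∀ x ∈ L i, ∀ y ∈ L j, ⁅x, y⁆ ∈ L (i + j))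
    (q r : ℤ) (hq : 1 ≤ q) (hr : 1 ≤ r)
    (hbound : ∀ i : ℤ, i < -q ∨ r < i → L i = ⊥)
    (hbot : L (-q) ≠ ⊥)
    (hq4 : q = 4) (hr4 : 4 ≤ r)
    (hB : IsIrred (L 0) (L (-1)))
    (hD : ∀ i : ℤ, 1 < i → L (-i) = bSpan (L (-i + 1)) (L (-1)))
    (hL1irr : IsIrred (L 0) (L 1))
    (hF1 : ∀ i : ℤ, -q < i → ∀ x ∈ L i, x ≠ 0 → ∃ y ∈ L (-1), ⁅y, x⁆ ≠ 0)
    (hV : ∀ V : Submodule F A, V ≤ L (-2) → V ≠ ⊥ → bSpan (L 0) V ≤ V →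
      bSpan V (L 1) = L (-1))
    (h1 : bSpan (L (-2)) (L (-2)) = L (-4))
    (h2 : bSpan (L (-4)) (L 3) = L (-1)) :
    IsIrred (L 0) (L (-2)) := by
  subst hq4
  have hg : ∀ (i j k : ℤ), i + j = k → ∀ x ∈ L i, ∀ y ∈ L j, ⁅x, y⁆ ∈ L k :=
    fun i j k hk x hx y hy => hk ▸ hgrade i j x hx y hy
  have hzero : ∀ (i j : ℤ), i + j < -4 → ∀ x ∈ L i, ∀ y ∈ L j, ⁅x, y⁆ = 0 := by
    intro i j hij x hx y hy
    have h := hgrade i j x hx y hy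
    rw [hbound (i + j) (Or.inl hij)] at h
    simpa using h
  have hD2 : L (-2) = bSpan (L (-1)) (L (-1)) := by
    have h := hD 2 (by norm_num)
    have e : (-2 : ℤ) + 1 = -1 := by norm_num
    rw [e] at h
    exact h
  constructor
  · intro h2b
    apply hbot
    rw [← h1, h2b]
    refine le_bot_iff.mp (bSpan_le fun u hu v hv => ?_)
    rw [(Submodule.mem_bot F).mp hu, zero_lie]
    exact Submodule.zero_mem ⊥
  · intro V hVle hVmod
    by_cases h0 : V = ⊥
    · exact Or.inl h0
    right
    have hVL1 : bSpan V (L 1) = L (-1) := hV V hVle h0 hVmod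
    have hV0l : ∀ l ∈ L 0, ∀ v ∈ V, ⁅l, v⁆ ∈ V := fun l hl v hv =>
      hVmod (lie_mem_bSpan hl hv)
    have hV0r : ∀ v ∈ V, ∀ l ∈ L 0, ⁅v, l⁆ ∈ V := by
      intro v hv l hl
      have h := V.neg_mem (hV0l l hl v hv)
      rwa [lie_skew] at h
    -- the core bracket computation
    have core : ∀ v ∈ V, ∀ v' ∈ V, ∀ z' ∈ L 3, ∀ b ∈ L (-4), ∀ z ∈ L 3,
        ⁅⁅v, ⁅v', z'⁆⁆, ⁅b, z⁆⁆ ∈ V := by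
      intro v hv v' hv' z' hz' b hb z hz
      have hvA : v ∈ L (-2) := hVle hv
      have hv'A : v' ∈ L (-2) := hVle hv'
      have hξ : ⁅v, z⁆ ∈ L 1 := hg (-2) 3 1 (by norm_num) v hvA z hz
      have hp' : ⁅v', z'⁆ ∈ L 1 := hg (-2) 3 1 (by norm_num) v' hv'A z' hz'
      have hμ : ⁅v', ⁅v, z⁆⁆ ∈ L (-1) := hg (-2) 1 (-1) (by norm_num) v' hv'A _ hξ
      have hm₁ : ⁅b, z⁆ ∈ L (-1) := hg (-4) 3 (-1) (by norm_num) b hb z hz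
      have hn : ⁅b, z'⁆ ∈ L (-1) := hg (-4) 3 (-1) (by norm_num) b hb z' hz'
      have hη : ⁅⁅v, z⁆, z'⁆ ∈ L 4 := hg 1 3 4 (by norm_num) _ hξ z' hz'
      have z1 : ⁅⁅v', ⁅v, z⁆⁆, b⁆ = 0 := hzero (-1) (-4) (by norm_num) _ hμ b hb
      have z2 : ⁅b, v⁆ = 0 := hzero (-4) (-2) (by norm_num) b hb v hvA
      have z3 : ⁅b, v'⁆ = 0 := hzero (-4) (-2) (by norm_num) b hb v' hv'A
      have e0 : ⁅⁅b, z⁆, ⁅v, ⁅v', z'⁆⁆⁆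
          = ⁅v, ⁅⁅b, z⁆, ⁅v', z'⁆⁆⁆ - ⁅⁅v, ⁅b, z⁆⁆, ⁅v', z'⁆⁆ := by
        rw [lie_lie v ⁅b, z⁆ ⁅v', z'⁆]; abel
      have e6 : ⁅b, ⁅v, z⁆⁆ = ⁅v, ⁅b, z⁆⁆ := by
        rw [leibniz_lie b v z, z2, zero_lie, zero_add]
      have e8 : ⁅b, ⁅v', z'⁆⁆ = ⁅v', ⁅b, z'⁆⁆ := by
        rw [leibniz_lie b v' z', z3, zero_lie, zero_add]
      have e4 : ⁅b, ⁅v', ⁅⁅v, z⁆, z'⁆⁆⁆ = ⁅v', ⁅b, ⁅⁅v, z⁆, z'⁆⁆⁆ := by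
        rw [leibniz_lie b v' ⁅⁅v, z⁆, z'⁆, z3, zero_lie, zero_add]
      have e1 : ⁅⁅v', ⁅v, z⁆⁆, ⁅b, z'⁆⁆ = ⁅b, ⁅⁅v', ⁅v, z⁆⁆, z'⁆⁆ := by
        rw [leibniz_lie ⁅v', ⁅v, z⁆⁆ b z', z1, zero_lie, zero_add]
      have e2 : ⁅⁅v, z⁆, ⁅v', z'⁆⁆
          = ⁅v', ⁅⁅v, z⁆, z'⁆⁆ - ⁅⁅v', ⁅v, z⁆⁆, z'⁆ := by
        rw [lie_lie v' ⁅v, z⁆ z']; abel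
      have eB : ⁅b, ⁅⁅v, z⁆, ⁅v', z'⁆⁆⁆
          = ⁅v', ⁅b, ⁅⁅v, z⁆, z'⁆⁆⁆ - ⁅⁅v', ⁅v, z⁆⁆, ⁅b, z'⁆⁆ := by
        rw [e2, lie_sub, e4, ← e1]
      have eC : ⁅⁅v, z⁆, ⁅b, ⁅v', z'⁆⁆⁆
          = -⁅⁅v', ⁅v, z⁆⁆, ⁅b, z'⁆⁆ + ⁅v', ⁅⁅v, z⁆, ⁅b, z'⁆⁆⁆ := by
        rw [e8, leibniz_lie ⁅v, z⁆ v' ⁅b, z'⁆, ← lie_skew ⁅v, z⁆ v', neg_lie]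
      have keyY : ⁅⁅b, z⁆, ⁅v, ⁅v', z'⁆⁆⁆
          = ⁅v, ⁅⁅b, z⁆, ⁅v', z'⁆⁆⁆ - ⁅v', ⁅b, ⁅⁅v, z⁆, z'⁆⁆⁆
            + ⁅v', ⁅⁅v, z⁆, ⁅b, z'⁆⁆⁆ := by
        rw [e0, ← e6, lie_lie b ⁅v, z⁆ ⁅v', z'⁆, eB, eC]; abel
      have hYmem : ⁅⁅b, z⁆, ⁅v, ⁅v', z'⁆⁆⁆ ∈ V := by
        rw [keyY]
        exact V.add_mem
          (V.sub_mem (hV0r v hv _ (hg (-1) 1 0 (by norm_num) _ hm₁ _ hp'))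
            (hV0r v' hv' _ (hg (-4) 4 0 (by norm_num) b hb _ hη)))
          (hV0r v' hv' _ (hg 1 (-1) 0 (by norm_num) _ hξ _ hn))
      have h := V.neg_mem hYmem
      rwa [lie_skew] at h
    -- extend the core computation over spans
    have A1 : ∀ v ∈ V, ∀ v' ∈ V, ∀ z' ∈ L 3, ∀ n ∈ L (-1),
        ⁅⁅v, ⁅v', z'⁆⁆, n⁆ ∈ V := by
      intro v hv v' hv' z' hz' n hn
      have hn' : n ∈ bSpan (L (-4)) (L 3) := by rw [h2]; exact hn
      exact lie_bSpan_right hn' fun b hb z hz => core v hv v' hv' z' hz' b hb z hz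
    have A2 : ∀ v ∈ V, ∀ p ∈ bSpan V (L 3), ∀ n ∈ L (-1), ⁅⁅v, p⁆, n⁆ ∈ V := by
      intro v hv p hp n hn
      exact lie_bSpan_mid hp fun v' hv' z' hz' => A1 v hv v' hv' z' hz' n hn
    have A3 : ∀ m ∈ bSpan V (bSpan V (L 3)), ∀ n ∈ L (-1), ⁅m, n⁆ ∈ V := by
      intro m hm n hn
      exact lie_bSpan_left hm fun v hv p hp => A2 v hv p hp n hn
    -- `P := [V, L3]` and `W := [V, P]` are `L 0`-submodules
    have hPle : bSpan V (L 3) ≤ L 1 :=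
      bSpan_le fun v hv z hz => hg (-2) 3 1 (by norm_num) v (hVle hv) z hz
    have hPmod : bSpan (L 0) (bSpan V (L 3)) ≤ bSpan V (L 3) := by
      refine bSpan_le fun l hl p hp => ?_
      refine lie_bSpan_right hp fun v hv z hz => ?_
      rw [leibniz_lie l v z]
      exact Submodule.add_mem _ (lie_mem_bSpan (hV0l l hl v hv) hz)
        (lie_mem_bSpan hv (hg 0 3 3 (by norm_num) l hl z hz))
    have hWle : bSpan V (bSpan V (L 3)) ≤ L (-1) :=
      bSpan_le fun v hv p hp => hg (-2) 1 (-1) (by norm_num) v (hVle hv) p (hPle hp)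
    have hWmod : bSpan (L 0) (bSpan V (bSpan V (L 3))) ≤ bSpan V (bSpan V (L 3)) := by
      refine bSpan_le fun l hl w hw => ?_
      refine lie_bSpan_right hw fun v hv p hp => ?_
      rw [leibniz_lie l v p]
      exact Submodule.add_mem _ (lie_mem_bSpan (hV0l l hl v hv) hp)
        (lie_mem_bSpan hv (hPmod (lie_mem_bSpan hl hp)))
    rcases hB.2 (bSpan V (bSpan V (L 3))) hWle hWmod with hW0 | hWfull
    · rcases hL1irr.2 (bSpan V (L 3)) hPle hPmod with hP0 | hPfull
      · -- `P = ⊥` : then `[V, L (-1)] = 0` and `L (-2) = [[V,L1],L(-1)] ⊆ V`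
        have hvn : ∀ v ∈ V, ∀ n ∈ L (-1), ⁅v, n⁆ = 0 := by
          intro v hv n hn
          have hn' : n ∈ bSpan (L (-4)) (L 3) := by rw [h2]; exact hn
          have hmem : ⁅v, n⁆ ∈ (⊥ : Submodule F A) := by
            refine lie_bSpan_right hn' fun b hb z hz => ?_
            have hvb : ⁅v, b⁆ = 0 := hzero (-2) (-4) (by norm_num) v (hVle hv) b hb
            have hvz : ⁅v, z⁆ = 0 := by
              have hmem2 : ⁅v, z⁆ ∈ bSpan V (L 3) := lie_mem_bSpan hv hz
              rw [hP0] at hmem2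
              simpa using hmem2
            rw [leibniz_lie v b z, hvb, hvz, zero_lie, lie_zero, add_zero]
            exact Submodule.zero_mem ⊥
          simpa using hmem
        have hle : L (-2) ≤ V := by
          rw [hD2]
          refine bSpan_le fun m hm n hn => ?_
          have hm' : m ∈ bSpan V (L 1) := by rw [hVL1]; exact hm
          refine lie_bSpan_left hm' fun v hv x hx => ?_
          rw [lie_lie v x n, hvn v hv n hn, lie_zero, sub_zero]
          exact hV0r v hv _ (hg 1 (-1) 0 (by norm_num) x hx n hn)
        exact le_antisymm hVle hle
      · -- `P = L 1` : then `W = [V, L1] = L (-1) ≠ ⊥`, contradiction with `W = ⊥`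
        exfalso
        apply hB.1
        rw [← hVL1, ← hPfull]
        exact hW0
    · -- `W = L (-1)` : then `L (-2) = [W, L (-1)] ⊆ V`
      have hle : L (-2) ≤ V := by
        rw [hD2]
        refine bSpan_le fun m hm n hn => ?_
        have hm' : m ∈ bSpan V (bSpan V (L 3)) := by rw [hWfull]; exact hm
        exact A3 m hm' n hn
      exact le_antisymm hVle hle

end GradedLie
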